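/- Let n ≥ 1, let F_n be the free group on n generators, and let ρ : F_n → SL(2,ℂ) be a homomorphism whose image is contained in the set of monomial matrices (each ρ(γ) is either diagonal or antidiagonal) and has no common eigenvector. Let h₀ be the line in sl(2,ℂ) spanned by [[1,0],[0,−1]] and let h₊⊕h₋ be the subspace of sl(2,ℂ) of matrices with zero diagonal; both are invariant under the adjoint action Ad∘ρ. Then dim_ℂ H¹(F_n, h₀) = n − 1 and dim_ℂ H¹(F_n, h₊⊕h₋) = 2n − 2; consequently dim_ℂ H¹(F_n, Ad∘ρ) = 3n − 3. -/

import Mathlib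

/-!
On a free group a 1-cocycle may take arbitrary values on the generators: prescribed values
`f i` extend to a cocycle `θ` through the affine action `γ • x = ρ(γ) x + θ(γ)`, which exists
by the universal property of the free group. Hence `dim Z¹ = n · dim V`, while
`dim B¹ = dim V - dim Vᴳ`, so that `dim H¹ = (n - 1) · dim V` whenever `Vᴳ = 0`.

An `Ad ∘ ρ`-invariant `X ∈ sl(2,ℂ)` commutes with every `ρ(γ)`, so each `ρ(γ)` preserves the
eigenspaces of `X`. If `X` were not scalar, an eigenspace of `X` would be a line preserved by
all `ρ(γ)`, i.e. spanned by a common eigenvector. So `X` is scalar, hence zero since its trace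
vanishes. Thus `h₀`, `h₊ ⊕ h₋` and `sl(2,ℂ)`, of dimensions `1`, `2`, `3`, have no invariants.
-/

open Matrix

/-- `sl(2,ℂ)`: the complex vector space of trace-zero `2 × 2` complex matrices. -/
noncomputable def sl2 : Submodule ℂ (Matrix (Fin 2) (Fin 2) ℂ) :=
  LinearMap.ker (Matrix.traceLinearMap (Fin 2) ℂ ℂ)

/-- `h₀`: the line in `sl(2,ℂ)` spanned by `[[1,0],[0,−1]]`. -/
noncomputable def h0 : Submodule ℂ (Matrix (Fin 2) (Fin 2) ℂ) :=
  Submodule.span ℂ {!![1, 0; 0, -1]}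

/-- `h₊ ⊕ h₋`: the subspace of `sl(2,ℂ)` of matrices with zero diagonal. -/
noncomputable def hpm : Submodule ℂ (Matrix (Fin 2) (Fin 2) ℂ) where
  carrier := {X | X 0 0 = 0 ∧ X 1 1 = 0}
  add_mem' := fun ha hb =>
    ⟨by simp [Matrix.add_apply, ha.1, hb.1], by simp [Matrix.add_apply, ha.2, hb.2]⟩
  zero_mem' := ⟨rfl, rfl⟩
  smul_mem' := fun c a ha =>
    ⟨by simp [Matrix.smul_apply, ha.1], by simp [Matrix.smul_apply, ha.2]⟩

open Module groupCohomology

universe u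

namespace Representation

variable {k G V : Type*} [CommRing k] [Group G] [AddCommGroup V] [Module k V]

def toLinearEquivHom (ρ : Representation k G V) : G →* V ≃ₗ[k] V :=
  (LinearMap.GeneralLinearGroup.generalLinearEquiv k V).toMonoidHom.comp ρ.asGroupHom

@[simp]
lemma toLinearEquivHom_apply (ρ : Representation k G V) (g : G) (v : V) :
    ρ.toLinearEquivHom g v = ρ g v :=
  rfl

end Representation

namespace Rep

variable {k ι : Type u} [CommRing k] (A : Rep k (FreeGroup ι))

/-- The generator `i` acts by `x ↦ ρ(i) x + f i`. -/
def affineLift (f : ι → A) : FreeGroup ι →* A ≃ᵃ[k] A :=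
  FreeGroup.lift fun i => AffineEquiv.ofLinearEquiv (A.ρ.toLinearEquivHom (.of i)) 0 (f i)

lemma linear_affineLift (f : ι → A) (γ : FreeGroup ι) :
    (affineLift A f γ).linear = A.ρ.toLinearEquivHom γ := by
  have : AffineEquiv.linearHom.comp (affineLift A f) = A.ρ.toLinearEquivHom :=
    FreeGroup.ext_hom _ _ fun i => by simp [affineLift]
  exact DFunLike.congr_fun this γ

lemma affineLift_apply (f : ι → A) (γ : FreeGroup ι) (x : A) :
    affineLift A f γ x = A.ρ γ x + affineLift A f γ 0 := by
  simpa [linear_affineLift] using (affineLift A f γ).map_vadd 0 x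

end Rep

namespace groupCohomology

section FreeGroup

variable {k ι : Type u} [CommRing k] (A : Rep k (FreeGroup ι))

lemma affineLift_apply_zero_mem_cocycles₁ (f : ι → A) :
    (fun γ => A.affineLift f γ 0) ∈ cocycles₁ A := by
  rw [mem_cocycles₁_iff]
  intro g h
  rw [map_mul, AffineEquiv.mul_def, AffineEquiv.trans_apply, Rep.affineLift_apply]

lemma cocycles₁_eq_zero_of_forall_of (x : cocycles₁ A) (hx : ∀ i, x (FreeGroup.of i) = 0) :
    x = 0 := by
  have hmul := (mem_cocycles₁_iff x).1 x.2
  suffices ∀ γ, x γ = 0 from cocycles₁_ext this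
  intro γ
  induction γ using FreeGroup.induction_on with
  | C1 => exact cocycles₁_map_one x
  | of i => exact hx i
  | inv_of i h => simpa [h, eq_comm] using hmul (FreeGroup.of i)⁻¹ (FreeGroup.of i)
  | mul a b ha hb => simp [hmul, ha, hb]

/-- Restriction of cocycles to the generators. -/
noncomputable def cocycles₁EquivOfFreeGroup : cocycles₁ A ≃ₗ[k] (ι → A) :=
  LinearEquiv.ofBijective (LinearMap.funLeft k A FreeGroup.of ∘ₗ (cocycles₁ A).subtype)
    ⟨(injective_iff_map_eq_zero _).2 fun x hx =>
        cocycles₁_eq_zero_of_forall_of A x fun i => congr_fun hx i,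
      fun f => ⟨⟨_, affineLift_apply_zero_mem_cocycles₁ A f⟩,
        funext fun i => by simp [Rep.affineLift]⟩⟩

end FreeGroup

section

variable {k G : Type u} [Field k] [Group G] (A : Rep k G)

lemma finrank_H1_add_finrank_coboundaries₁ [FiniteDimensional k (cocycles₁ A)] :
    finrank k (H1 A) + finrank k (coboundaries₁ A) = finrank k (cocycles₁ A) := by
  have hsurj : Function.Surjective (H1π A).hom :=
    (ModuleCat.epi_iff_surjective _).1 inferInstance
  have hker : LinearMap.ker (H1π A).hom = (coboundaries₁ A).comap (cocycles₁ A).subtype := by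
    ext x
    exact H1π_eq_zero_iff x
  rw [← LinearMap.finrank_range_add_finrank_ker (H1π A).hom, LinearMap.range_eq_top.2 hsurj,
    finrank_top, hker,
    (Submodule.comapSubtypeEquivOfLe (coboundaries₁_le_cocycles₁ A)).finrank_eq]

lemma finrank_coboundaries₁_add_finrank_invariants [FiniteDimensional k A] :
    finrank k (coboundaries₁ A) + finrank k A.ρ.invariants = finrank k A := by
  rw [← d₀₁_ker_eq_invariants]
  exact LinearMap.finrank_range_add_finrank_ker (d₀₁ A).hom

end

theorem finrank_H1_freeGroup {k ι : Type u} [Field k] [Fintype ι] (A : Rep k (FreeGroup ι))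
    [FiniteDimensional k A] :
    finrank k (H1 A) + finrank k A =
      Fintype.card ι * finrank k A + finrank k A.ρ.invariants := by
  have e := cocycles₁EquivOfFreeGroup A
  have : FiniteDimensional k (cocycles₁ A) := e.symm.finiteDimensional
  have hZ : finrank k (cocycles₁ A) = Fintype.card ι * finrank k A := by
    simp [e.finrank_eq, Module.finrank_pi_fintype]
  have := finrank_H1_add_finrank_coboundaries₁ A
  have := finrank_coboundaries₁_add_finrank_invariants A
  omega

end groupCohomology

theorem Matrix.exists_eq_scalar_of_forall_commute {K ι : Type*} [Field K] [IsAlgClosed K]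
    (g : ι → Matrix (Fin 2) (Fin 2) K)
    (hg : ¬∃ v : Fin 2 → K, v ≠ 0 ∧ ∀ i, ∃ c : K, g i *ᵥ v = c • v)
    {X : Matrix (Fin 2) (Fin 2) K} (hX : ∀ i, Commute X (g i)) :
    ∃ μ, X = scalar (Fin 2) μ := by
  obtain ⟨μ, hμ⟩ := End.exists_eigenvalue (toLin' X)
  set E := End.eigenspace (toLin' X) μ
  refine ⟨μ, toLin'.injective (LinearMap.ext fun v => ?_)⟩
  by_contra hv
  have hE : E ≠ ⊤ := fun h => hv <| by
    simpa [scalar_apply, smul_mulVec] using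
      End.mem_eigenspace_iff.1 (h ▸ Submodule.mem_top : v ∈ E)
  have hE_one : finrank K E = 1 := by
    have hlt : finrank K E < 2 := by simpa using Submodule.finrank_lt hE
    have hpos : 1 ≤ finrank K E := Submodule.one_le_finrank_iff.2 hμ
    omega
  obtain ⟨w, hwE, hw0⟩ := hμ.exists_hasEigenvector
  refine hg ⟨w, hw0, fun i => ?_⟩
  have hgw : g i *ᵥ w ∈ E := by
    rw [End.mem_eigenspace_iff] at hwE ⊢
    simp only [toLin'_apply] at hwE ⊢
    rw [mulVec_mulVec, (hX i).eq, ← mulVec_mulVec, hwE, mulVec_smul]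
  obtain ⟨c, hc⟩ :=
    (finrank_eq_one_iff_of_nonzero' (⟨w, hwE⟩ : E) (by simpa using hw0)).1 hE_one ⟨_, hgw⟩
  exact ⟨c, congrArg Subtype.val hc.symm⟩

lemma mem_sl2_iff {X : Matrix (Fin 2) (Fin 2) ℂ} : X ∈ sl2 ↔ X.trace = 0 :=
  Iff.rfl

lemma finrank_sl2 : finrank ℂ sl2 = 3 := by
  have hsurj : Function.Surjective (traceLinearMap (Fin 2) ℂ ℂ) :=
    fun c => ⟨!![c, 0; 0, 0], by simp [trace_fin_two_of]⟩
  have := LinearMap.finrank_range_add_finrank_ker (traceLinearMap (Fin 2) ℂ ℂ)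
  rw [LinearMap.range_eq_top.2 hsurj, finrank_top, finrank_matrix,
    finrank_self, Fintype.card_fin] at this
  rw [sl2]
  omega

lemma h0_le_sl2 : h0 ≤ sl2 := by
  rw [h0, Submodule.span_le, Set.singleton_subset_iff]
  simp [mem_sl2_iff, trace_fin_two_of]

lemma finrank_h0 : finrank ℂ h0 = 1 :=
  finrank_span_singleton fun h => by simpa using congr_fun₂ h 0 0

lemma hpm_le_sl2 : hpm ≤ sl2 := fun X ⟨h00, h11⟩ => by
  simp [mem_sl2_iff, trace_fin_two, h00, h11]

noncomputable def hpmEquiv : hpm ≃ₗ[ℂ] (Fin 2 → ℂ) where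
  toFun X := ![X.1 0 1, X.1 1 0]
  map_add' X Y := by ext i; fin_cases i <;> simp
  map_smul' c X := by ext i; fin_cases i <;> simp
  invFun p := ⟨!![0, p 0; p 1, 0], rfl, rfl⟩
  left_inv X := by
    ext i j
    fin_cases i <;> fin_cases j <;> simp [X.2.1, X.2.2]
  right_inv p := by ext i; fin_cases i <;> simp

lemma finrank_hpm : finrank ℂ hpm = 2 := by
  simp [hpmEquiv.finrank_eq]

section

variable {G : Type*} [Group G] (ρ : G →* SpecialLinearGroup (Fin 2) ℂ)

lemma eq_zero_of_mem_sl2_of_forall_conj_eq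
    (hirr : ¬ ∃ v : Fin 2 → ℂ, v ≠ 0 ∧ ∀ γ : G,
      ∃ c : ℂ, (ρ γ : Matrix (Fin 2) (Fin 2) ℂ) *ᵥ v = c • v)
    {X : Matrix (Fin 2) (Fin 2) ℂ} (hX : X ∈ sl2)
    (hconj : ∀ γ, (ρ γ : Matrix (Fin 2) (Fin 2) ℂ) * X *
      ((ρ γ)⁻¹ : SpecialLinearGroup (Fin 2) ℂ) = X) :
    X = 0 := by
  have hcomm : ∀ γ, Commute X (ρ γ : Matrix (Fin 2) (Fin 2) ℂ) := fun γ =>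
    calc X * ρ γ = ρ γ * X * ((ρ γ)⁻¹ : SpecialLinearGroup (Fin 2) ℂ) * ρ γ := by
          rw [hconj]
      _ = ρ γ * X := by simp [Matrix.mul_assoc, adjugate_mul]
  obtain ⟨μ, rfl⟩ := exists_eq_scalar_of_forall_commute _ hirr hcomm
  rw [mem_sl2_iff, trace_fin_two] at hX
  have hμ : μ = 0 := by simpa [← two_mul] using hX
  simp [hμ]

lemma invariants_eq_bot_of_le_sl2
    (hirr : ¬ ∃ v : Fin 2 → ℂ, v ≠ 0 ∧ ∀ γ : G,
      ∃ c : ℂ, (ρ γ : Matrix (Fin 2) (Fin 2) ℂ) *ᵥ v = c • v)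
    {W : Submodule ℂ (Matrix (Fin 2) (Fin 2) ℂ)} (hW : W ≤ sl2) (τ : Representation ℂ G W)
    (hτ : ∀ γ (X : W), (τ γ X : Matrix (Fin 2) (Fin 2) ℂ) =
      (ρ γ : Matrix (Fin 2) (Fin 2) ℂ) * X * ((ρ γ)⁻¹ : SpecialLinearGroup (Fin 2) ℂ)) :
    τ.invariants = ⊥ :=
  eq_bot_iff.2 fun X hX => Subtype.ext <|
    eq_zero_of_mem_sl2_of_forall_conj_eq ρ hirr (hW X.2) fun γ =>
      (hτ γ X).symm.trans (congrArg Subtype.val (hX γ))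

end

lemma finrank_H1_add_finrank_of_le_sl2 {n : ℕ}
    (ρ : FreeGroup (Fin n) →* SpecialLinearGroup (Fin 2) ℂ)
    (hirr : ¬ ∃ v : Fin 2 → ℂ, v ≠ 0 ∧ ∀ γ : FreeGroup (Fin n),
      ∃ c : ℂ, (ρ γ : Matrix (Fin 2) (Fin 2) ℂ) *ᵥ v = c • v)
    {W : Submodule ℂ (Matrix (Fin 2) (Fin 2) ℂ)} (hW : W ≤ sl2)
    (τ : Representation ℂ (FreeGroup (Fin n)) W)
    (hτ : ∀ γ (X : W), (τ γ X : Matrix (Fin 2) (Fin 2) ℂ) =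
      (ρ γ : Matrix (Fin 2) (Fin 2) ℂ) * X * ((ρ γ)⁻¹ : SpecialLinearGroup (Fin 2) ℂ)) :
    finrank ℂ (H1 (Rep.of τ)) + finrank ℂ W = n * finrank ℂ W := by
  have := finrank_H1_freeGroup (Rep.of τ)
  rwa [Rep.of_ρ, invariants_eq_bot_of_le_sl2 ρ hirr hW τ hτ, finrank_bot, add_zero,
    Fintype.card_fin] at this

theorem dim_H1_monomial_general
    (n : ℕ)
    (ρ : FreeGroup (Fin n) →* SpecialLinearGroup (Fin 2) ℂ)
    (hirr : ¬ ∃ v : Fin 2 → ℂ, v ≠ 0 ∧ ∀ γ : FreeGroup (Fin n),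
      ∃ c : ℂ, ((ρ γ : SpecialLinearGroup (Fin 2) ℂ) : Matrix (Fin 2) (Fin 2) ℂ) *ᵥ v = c • v)
    (σ₀ : Representation ℂ (FreeGroup (Fin n)) h0)
    (hσ₀ : ∀ (γ : FreeGroup (Fin n)) (X : h0),
      (σ₀ γ X : Matrix (Fin 2) (Fin 2) ℂ)
        = ((ρ γ : SpecialLinearGroup (Fin 2) ℂ) : Matrix (Fin 2) (Fin 2) ℂ)
            * (X : Matrix (Fin 2) (Fin 2) ℂ)
            * (((ρ γ)⁻¹ : SpecialLinearGroup (Fin 2) ℂ) : Matrix (Fin 2) (Fin 2) ℂ))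
    (σpm : Representation ℂ (FreeGroup (Fin n)) hpm)
    (hσpm : ∀ (γ : FreeGroup (Fin n)) (X : hpm),
      (σpm γ X : Matrix (Fin 2) (Fin 2) ℂ)
        = ((ρ γ : SpecialLinearGroup (Fin 2) ℂ) : Matrix (Fin 2) (Fin 2) ℂ)
            * (X : Matrix (Fin 2) (Fin 2) ℂ)
            * (((ρ γ)⁻¹ : SpecialLinearGroup (Fin 2) ℂ) : Matrix (Fin 2) (Fin 2) ℂ))
    (σ : Representation ℂ (FreeGroup (Fin n)) sl2)
    (hσ : ∀ (γ : FreeGroup (Fin n)) (X : sl2),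
      (σ γ X : Matrix (Fin 2) (Fin 2) ℂ)
        = ((ρ γ : SpecialLinearGroup (Fin 2) ℂ) : Matrix (Fin 2) (Fin 2) ℂ)
            * (X : Matrix (Fin 2) (Fin 2) ℂ)
            * (((ρ γ)⁻¹ : SpecialLinearGroup (Fin 2) ℂ) : Matrix (Fin 2) (Fin 2) ℂ)) :
    Module.finrank ℂ (groupCohomology.H1 (Rep.of σ₀)) = n - 1 ∧
    Module.finrank ℂ (groupCohomology.H1 (Rep.of σpm)) = 2 * n - 2 ∧
    Module.finrank ℂ (groupCohomology.H1 (Rep.of σ)) = 3 * n - 3 := by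
  have h₀ := finrank_H1_add_finrank_of_le_sl2 ρ hirr h0_le_sl2 σ₀ hσ₀
  have hₚₘ := finrank_H1_add_finrank_of_le_sl2 ρ hirr hpm_le_sl2 σpm hσpm
  have hₛₗ := finrank_H1_add_finrank_of_le_sl2 ρ hirr le_rfl σ hσ
  rw [finrank_h0] at h₀
  rw [finrank_hpm] at hₚₘ
  rw [finrank_sl2] at hₛₗ
  omega

/-- Let `ρ : F_n → SL(2,ℂ)` (`n ≥ 1`) be a representation by monomial matrices (each
`ρ(γ)` is diagonal or antidiagonal) with no common eigenvector. Then
`dim_ℂ H¹(F_n, h₀) = n − 1` and `dim_ℂ H¹(F_n, h₊ ⊕ h₋) = 2n − 2`; consequently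
`dim_ℂ H¹(F_n, Ad ∘ ρ) = 3n − 3`. -/
theorem dim_H1_monomial
    (n : ℕ) (hn : 1 ≤ n)
    (ρ : FreeGroup (Fin n) →* SpecialLinearGroup (Fin 2) ℂ)
    (hmono : ∀ γ : FreeGroup (Fin n),
      ((ρ γ : SpecialLinearGroup (Fin 2) ℂ) : Matrix (Fin 2) (Fin 2) ℂ).IsDiag ∨
      (((ρ γ : SpecialLinearGroup (Fin 2) ℂ) : Matrix (Fin 2) (Fin 2) ℂ) 0 0 = 0 ∧
       ((ρ γ : SpecialLinearGroup (Fin 2) ℂ) : Matrix (Fin 2) (Fin 2) ℂ) 1 1 = 0))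
    (hirr : ¬ ∃ v : Fin 2 → ℂ, v ≠ 0 ∧ ∀ γ : FreeGroup (Fin n),
      ∃ c : ℂ, ((ρ γ : SpecialLinearGroup (Fin 2) ℂ) : Matrix (Fin 2) (Fin 2) ℂ) *ᵥ v = c • v)
    (σ₀ : Representation ℂ (FreeGroup (Fin n)) h0)
    (hσ₀ : ∀ (γ : FreeGroup (Fin n)) (X : h0),
      (σ₀ γ X : Matrix (Fin 2) (Fin 2) ℂ)
        = ((ρ γ : SpecialLinearGroup (Fin 2) ℂ) : Matrix (Fin 2) (Fin 2) ℂ)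
            * (X : Matrix (Fin 2) (Fin 2) ℂ)
            * (((ρ γ)⁻¹ : SpecialLinearGroup (Fin 2) ℂ) : Matrix (Fin 2) (Fin 2) ℂ))
    (σpm : Representation ℂ (FreeGroup (Fin n)) hpm)
    (hσpm : ∀ (γ : FreeGroup (Fin n)) (X : hpm),
      (σpm γ X : Matrix (Fin 2) (Fin 2) ℂ)
        = ((ρ γ : SpecialLinearGroup (Fin 2) ℂ) : Matrix (Fin 2) (Fin 2) ℂ)
            * (X : Matrix (Fin 2) (Fin 2) ℂ)
            * (((ρ γ)⁻¹ : SpecialLinearGroup (Fin 2) ℂ) : Matrix (Fin 2) (Fin 2) ℂ))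
    (σ : Representation ℂ (FreeGroup (Fin n)) sl2)
    (hσ : ∀ (γ : FreeGroup (Fin n)) (X : sl2),
      (σ γ X : Matrix (Fin 2) (Fin 2) ℂ)
        = ((ρ γ : SpecialLinearGroup (Fin 2) ℂ) : Matrix (Fin 2) (Fin 2) ℂ)
            * (X : Matrix (Fin 2) (Fin 2) ℂ)
            * (((ρ γ)⁻¹ : SpecialLinearGroup (Fin 2) ℂ) : Matrix (Fin 2) (Fin 2) ℂ)) :
    Module.finrank ℂ (groupCohomology.H1 (Rep.of σ₀)) = n - 1 ∧
    Module.finrank ℂ (groupCohomology.H1 (Rep.of σpm)) = 2 * n - 2 ∧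
    Module.finrank ℂ (groupCohomology.H1 (Rep.of σ)) = 3 * n - 3 :=
  dim_H1_monomial_general n ρ hirr σ₀ hσ₀ σpm hσpm σ hσ
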